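/- Let 0 < ε ≤ 1/2, let X ⊆ ℝ^d be finite and (k,ε)-irreducible with optimal k-means partition X₁,…,X_k, let 1 ≤ i < k, and let C_i be a set of i centers satisfying the invariant P(i). Let j ∈ {i+1,…,k} be any index with Φ(C_i,X_j) ≥ (ε/(4k))·Φ(C_i,X) (such an index exists). If S consists of at least 2¹²·k²/ε² independent D²-samples from X w.r.t. C_i, then with probability at least 1 − 1/(16k), at least 2⁶·k/ε of the samples lie in X_j. -/

import Mathlib

/-!
`C_i` has at most `k - 1` points, so irreducibility gives
`Φ(C_i, X) ≥ Δ_{k-1}(X) ≥ (1 + ε) Δ_k(X)`, while by the invariant the covered clusters cost at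
most `(1 + ε/16) Δ_k(X)` in total. If every uncovered cluster had a share below `ε/(4k)`, then
`(1 - ε/4)(1 + ε) Δ_k(X) < (1 + ε/16) Δ_k(X)`, which is impossible for `0 ≤ ε ≤ 1/2`.

The number of samples in `X_j` is a sum of `N` independent indicators of success probability
`q ≥ ε/(4k)`, so its mean is `Nq ≥ 2¹⁰k/ε` and its variance is at most `Nq`. By Chebyshev's
inequality it falls below `2⁶k/ε ≤ Nq/2` with probability at most `4/(Nq) ≤ 1/(16k)`.
-/

open Finset
open scoped BigOperators
open Classical

noncomputable section

/-- Points of `ℝ^d`. -/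
abbrev Pt (d : ℕ) := EuclideanSpace ℝ (Fin d)

/-- `Φ(C, X) = Σ_{x ∈ X} min_{c ∈ C} ‖x - c‖²`. -/
noncomputable def Phi {d : ℕ} (C X : Finset (Pt d)) : ℝ :=
  ∑ x ∈ X, sInf ((fun c => ‖x - c‖ ^ 2) '' (C : Set (Pt d)))

/-- The centroid `μ(X)` of a finite set of points. -/
noncomputable def ctr {d : ℕ} (X : Finset (Pt d)) : Pt d :=
  (X.card : ℝ)⁻¹ • ∑ x ∈ X, x

/-- `Δ₁(X) = Φ({μ(X)}, X)`. -/
noncomputable def Delta1 {d : ℕ} (X : Finset (Pt d)) : ℝ := Phi {ctr X} X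

/-- `Δ_k(X)`: the optimal `k`-means cost of `X`. -/
noncomputable def DeltaK {d : ℕ} (k : ℕ) (X : Finset (Pt d)) : ℝ :=
  sInf ((fun C => Phi C X) '' {C : Finset (Pt d) | C.card = k})

/-- `X₁, …, X_k` is an optimal `k`-means partition of `X`. -/
def IsOptPartition {d : ℕ} (k : ℕ) (X : Finset (Pt d)) (Xs : Fin k → Finset (Pt d)) : Prop :=
  (∀ j, (Xs j).Nonempty) ∧
  (∀ j l, j ≠ l → Disjoint (Xs j) (Xs l)) ∧
  Finset.univ.biUnion Xs = X ∧
  ∑ j, Delta1 (Xs j) = DeltaK k X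

/-- `X` is `(k, ε)`-irreducible: `Δ_{k-1}(X) ≥ (1+ε)·Δ_k(X)`. -/
def KIrreducible {d : ℕ} (k : ℕ) (ε : ℝ) (X : Finset (Pt d)) : Prop :=
  (1 + ε) * DeltaK k X ≤ DeltaK (k - 1) X

/-- The invariant `P(i)`: `Ci` consists of the centers `c r` for `r < i` (clusters reindexed
so that the covered clusters come first), each `c r` is a `(1 + ε/16)`-good center for the
optimal cluster `Xs r`, and `Φ(Ci, X) > 0`. -/
def InvariantP {d k : ℕ} (ε : ℝ) (X : Finset (Pt d)) (Xs : Fin k → Finset (Pt d))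
    (i : ℕ) (c : Fin k → Pt d) (Ci : Finset (Pt d)) : Prop :=
  Ci = Finset.image c (Finset.univ.filter (fun r : Fin k => r.val < i)) ∧
  (∀ r : Fin k, r.val < i → Phi {c r} (Xs r) ≤ (1 + ε / 16) * Delta1 (Xs r)) ∧
  0 < Phi Ci X

section Cost
variable {d : ℕ}

lemma Phi_nonneg (C X : Finset (Pt d)) : 0 ≤ Phi C X :=
  sum_nonneg fun _ _ => Real.sInf_nonneg (by rintro _ ⟨c, -, rfl⟩; positivity)

lemma Phi_eq_sum_Phi_singleton (C X : Finset (Pt d)) : Phi C X = ∑ x ∈ X, Phi C {x} := by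
  simp [Phi]

lemma bddBelow_image_sq_norm_sub (x : Pt d) (S : Set (Pt d)) :
    BddBelow ((fun c => ‖x - c‖ ^ 2) '' S) :=
  ⟨0, by rintro _ ⟨c, -, rfl⟩; positivity⟩

lemma Phi_anti {C C' : Finset (Pt d)} (h : C ⊆ C') (hC : C.Nonempty) (X : Finset (Pt d)) :
    Phi C' X ≤ Phi C X :=
  sum_le_sum fun x _ => csInf_le_csInf (bddBelow_image_sq_norm_sub x _)
    ((coe_nonempty.2 hC).image _) (Set.image_mono (coe_subset.2 h))

lemma Phi_le_Phi_singleton {C : Finset (Pt d)} {c : Pt d} (hc : c ∈ C) (X : Finset (Pt d)) :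
    Phi C X ≤ Phi {c} X :=
  Phi_anti (singleton_subset_iff.2 hc) (singleton_nonempty c) X

lemma exists_ne_of_Phi_pos {C X : Finset (Pt d)} (hpos : 0 < Phi C X) :
    ∃ x ∈ X, ∃ c ∈ C, x ≠ c := by
  by_contra! h
  refine hpos.not_ge (sum_nonpos fun x hx => ?_)
  obtain rfl | ⟨c, hc⟩ := C.eq_empty_or_nonempty
  · simp
  · exact (csInf_le (bddBelow_image_sq_norm_sub x _) ⟨c, hc, rfl⟩).trans
      (by simp [h x hx c hc])

lemma DeltaK_nonneg (k : ℕ) (X : Finset (Pt d)) : 0 ≤ DeltaK k X :=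
  Real.sInf_nonneg (by rintro _ ⟨C, -, rfl⟩; exact Phi_nonneg C X)

lemma DeltaK_le_Phi [Nontrivial (Pt d)] {m : ℕ} {C : Finset (Pt d)} (hm : C.card ≤ m)
    (hC : C.Nonempty) (X : Finset (Pt d)) : DeltaK m X ≤ Phi C X := by
  have := Module.Free.infinite ℝ (Pt d)
  obtain ⟨C', hCC', hC'⟩ := Infinite.exists_superset_card_eq C m hm
  have hbdd : BddBelow ((fun C => Phi C X) '' {C : Finset (Pt d) | C.card = m}) :=
    ⟨0, by rintro _ ⟨D, -, rfl⟩; exact Phi_nonneg D X⟩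
  exact (csInf_le hbdd ⟨C', hC', rfl⟩).trans (Phi_anti hCC' hC X)

lemma sum_filter_mem_Phi_singleton {C X Y : Finset (Pt d)} (h : Y ⊆ X) :
    ∑ a ∈ univ.filter (fun a : X => (a : Pt d) ∈ Y), Phi C {(a : Pt d)} = Phi C Y := by
  rw [sum_filter, sum_coe_sort X fun x => if x ∈ Y then Phi C {x} else 0, ← sum_filter,
    filter_mem_eq_inter, inter_eq_right.2 h, ← Phi_eq_sum_Phi_singleton]

end Cost

section Partition
variable {d k : ℕ} {X : Finset (Pt d)} {Xs : Fin k → Finset (Pt d)}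

lemma IsOptPartition.subset (hopt : IsOptPartition k X Xs) (j : Fin k) : Xs j ⊆ X :=
  hopt.2.2.1 ▸ subset_biUnion_of_mem Xs (mem_univ j)

lemma IsOptPartition.Phi_eq_sum (hopt : IsOptPartition k X Xs) (C : Finset (Pt d)) :
    Phi C X = ∑ j, Phi C (Xs j) := by
  rw [← hopt.2.2.1, Phi, sum_biUnion fun a _ b _ hab => hopt.2.1 a b hab]
  rfl

end Partition

section Invariant
variable {d k : ℕ} {ε : ℝ} {X : Finset (Pt d)} {Xs : Fin k → Finset (Pt d)} {i : ℕ}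
  {c : Fin k → Pt d} {Ci : Finset (Pt d)}

lemma InvariantP.card_le (hinv : InvariantP ε X Xs i c Ci) : Ci.card ≤ i := by
  rw [hinv.1]
  exact card_image_le.trans (Fin.card_filter_val_lt.trans_le (min_le_right k i))

lemma InvariantP.sum_Phi_covered_le (hinv : InvariantP ε X Xs i c Ci)
    (hopt : IsOptPartition k X Xs) (hε : 0 ≤ ε) :
    ∑ r ∈ univ.filter (fun r : Fin k => r.val < i), Phi Ci (Xs r) ≤ (1 + ε / 16) * DeltaK k X := by
  calc ∑ r ∈ univ.filter (fun r : Fin k => r.val < i), Phi Ci (Xs r)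
      ≤ ∑ r ∈ univ.filter (fun r : Fin k => r.val < i), (1 + ε / 16) * Delta1 (Xs r) := by
        refine sum_le_sum fun r hr => ?_
        have hri := (mem_filter.1 hr).2
        have hc : c r ∈ Ci := hinv.1 ▸ mem_image_of_mem c (mem_filter.2 ⟨mem_univ r, hri⟩)
        exact (Phi_le_Phi_singleton hc _).trans (hinv.2.1 r hri)
    _ ≤ ∑ r, (1 + ε / 16) * Delta1 (Xs r) :=
        sum_le_sum_of_subset_of_nonneg (filter_subset _ _) fun r _ _ =>
          mul_nonneg (by linarith) (Phi_nonneg _ _)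
    _ = (1 + ε / 16) * DeltaK k X := by rw [← mul_sum, hopt.2.2.2]

lemma InvariantP.one_add_mul_DeltaK_le (hinv : InvariantP ε X Xs i c Ci)
    (hirr : KIrreducible k ε X) (hik : i < k) : (1 + ε) * DeltaK k X ≤ Phi Ci X := by
  obtain ⟨x, -, c₀, hc₀, hne⟩ := exists_ne_of_Phi_pos hinv.2.2
  have : Nontrivial (Pt d) := ⟨x, c₀, hne⟩
  exact hirr.trans (DeltaK_le_Phi (hinv.card_le.trans (Nat.le_sub_one_of_lt hik)) ⟨c₀, hc₀⟩ X)

theorem InvariantP.exists_uncovered_le_Phi (hinv : InvariantP ε X Xs i c Ci)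
    (hε₀ : 0 ≤ ε) (hε : ε ≤ 1 / 2) (hirr : KIrreducible k ε X) (hopt : IsOptPartition k X Xs)
    (hik : i < k) : ∃ j : Fin k, i ≤ j.val ∧ ε / (4 * k) * Phi Ci X ≤ Phi Ci (Xs j) := by
  by_contra! hlight
  have hk : (0 : ℝ) < k := by exact_mod_cast (Nat.zero_le i).trans_lt hik
  have huncovered : ∑ r ∈ univ.filter (fun r : Fin k => ¬ r.val < i), Phi Ci (Xs r)
      < ε / 4 * Phi Ci X := calc
    _ < ∑ r ∈ univ.filter (fun r : Fin k => ¬ r.val < i), ε / (4 * k) * Phi Ci X :=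
        sum_lt_sum_of_nonempty ⟨⟨i, hik⟩, by simp⟩
          fun r hr => hlight r (not_lt.1 (mem_filter.1 hr).2)
    _ ≤ k * (ε / (4 * k) * Phi Ci X) := by
        rw [sum_const, nsmul_eq_mul]
        gcongr
        · exact mul_nonneg (by positivity) (Phi_nonneg _ _)
        · exact_mod_cast (card_filter_le _ _).trans_eq (card_fin k)
    _ = ε / 4 * Phi Ci X := by field_simp
  have hsplit := (hopt.Phi_eq_sum Ci).trans
    (sum_filter_add_sum_filter_not univ (fun r : Fin k => r.val < i) _).symm
  have hcovered := hinv.sum_Phi_covered_le hopt hε₀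
  have hlower := mul_le_mul_of_nonneg_left (hinv.one_add_mul_DeltaK_le hirr hik)
    (by linarith : 0 ≤ 1 - ε / 4)
  nlinarith [mul_nonneg (mul_nonneg (DeltaK_nonneg k X) hε₀) (by linarith : 0 ≤ 11 / 16 - ε / 4)]

end Invariant

section ProductWeights

/- `∏ t, w (s t)` is the probability of the sequence `s` of `N` independent draws from the
distribution `w` on `α`. -/
variable {α : Type*} [Fintype α] (w : α → ℝ) {N : ℕ}

lemma sum_prod_mul_prod (F : Fin N → α → ℝ) :
    ∑ s : Fin N → α, (∏ t, w (s t)) * ∏ t, F t (s t) = ∏ t, ∑ a, w a * F t a := by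
  simp_rw [← prod_mul_distrib]
  exact (Fintype.prod_sum fun t a => w a * F t a).symm

variable {w}

lemma sum_prod_eq_one (hw : ∑ a, w a = 1) : ∑ s : Fin N → α, ∏ t, w (s t) = 1 := by
  simpa [hw] using sum_prod_mul_prod w (N := N) 1

lemma sum_prod_mul_apply (hw : ∑ a, w a = 1) (f : α → ℝ) (t₀ : Fin N) :
    ∑ s : Fin N → α, (∏ t, w (s t)) * f (s t₀) = ∑ a, w a * f a := by
  simpa [Pi.mulSingle_apply, ite_apply, apply_ite, hw] using
    sum_prod_mul_prod w (Pi.mulSingle t₀ f)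

lemma sum_prod_mul_apply_mul_apply (hw : ∑ a, w a = 1) (f g : α → ℝ) {t₀ t₁ : Fin N}
    (h : t₀ ≠ t₁) :
    ∑ s : Fin N → α, (∏ t, w (s t)) * (f (s t₀) * g (s t₁))
      = (∑ a, w a * f a) * ∑ a, w a * g a := by
  set F : Fin N → α → ℝ := Pi.mulSingle t₀ f * Pi.mulSingle t₁ g
  have hF : ∀ s : Fin N → α, ∏ t, F t (s t) = f (s t₀) * g (s t₁) := by
    intro s
    simp only [F, Pi.mul_apply, prod_mul_distrib]
    simp [Pi.mulSingle_apply, ite_apply]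
  have hE : ∀ t, ∑ a, w a * F t a
      = (Pi.mulSingle t₀ (∑ a, w a * f a) : Fin N → ℝ) t
        * (Pi.mulSingle t₁ (∑ a, w a * g a) : Fin N → ℝ) t := by
    intro t
    by_cases h₀ : t = t₀ <;> by_cases h₁ : t = t₁ <;> simp_all [F, Pi.mulSingle_apply, ite_apply]
  have := sum_prod_mul_prod w F
  simp only [hF, hE, prod_mul_distrib] at this
  simpa using this

lemma sum_prod_mul_sum_sq (hw : ∑ a, w a = 1) (g : α → ℝ) (hg : ∑ a, w a * g a = 0) :
    ∑ s : Fin N → α, (∏ t, w (s t)) * (∑ t, g (s t)) ^ 2 = N * ∑ a, w a * g a ^ 2 := by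
  calc ∑ s : Fin N → α, (∏ t, w (s t)) * (∑ t, g (s t)) ^ 2
      = ∑ t, ∑ u, ∑ s : Fin N → α, (∏ v, w (s v)) * (g (s t) * g (s u)) := by
        simp_rw [sq, sum_mul_sum, mul_sum]
        rw [sum_comm]
        exact sum_congr rfl fun _ _ => sum_comm
    _ = ∑ t : Fin N, ∑ u, if t = u then ∑ a, w a * g a ^ 2 else 0 := by
        refine sum_congr rfl fun t _ => sum_congr rfl fun u _ => ?_
        split_ifs with htu
        · subst htu
          simpa only [sq] using sum_prod_mul_apply hw (fun a => g a * g a) t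
        · rw [sum_prod_mul_apply_mul_apply hw g g htu, hg, zero_mul]
    _ = N * ∑ a, w a * g a ^ 2 := by simp

lemma sum_prod_filter_card_lt_le (hw₀ : ∀ a, 0 ≤ w a) (hw : ∑ a, w a = 1)
    (p : α → Prop) [DecidablePred p] {θ : ℝ} (hθ : 0 < θ)
    (hθq : 2 * θ ≤ N * ∑ a ∈ univ.filter p, w a) :
    ∑ s ∈ univ.filter (fun s : Fin N → α => ¬ θ ≤ ((univ.filter fun t => p (s t)).card : ℝ)),
      ∏ t, w (s t) ≤ 4 / (N * ∑ a ∈ univ.filter p, w a) := by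
  set q := ∑ a ∈ univ.filter p, w a
  set g : α → ℝ := fun a => (if p a then 1 else 0) - q
  have hwq : ∑ a, w a * (if p a then 1 else 0) = q := by simp [q, sum_filter]
  have hg : ∑ a, w a * g a = 0 := by
    simp only [g, mul_sub, sum_sub_distrib, ← sum_mul, hwq, hw, one_mul, sub_self]
  have hg₂ : ∑ a, w a * g a ^ 2 ≤ q := by
    have : ∀ a, w a * g a ^ 2 = (1 - 2 * q) * (w a * (if p a then 1 else 0)) + q ^ 2 * w a := by
      intro a; by_cases h : p a <;> simp [g, h] <;> ring
    simp only [this, sum_add_distrib, ← mul_sum, hwq, hw]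
    nlinarith
  have hcount : ∀ s : Fin N → α,
      ((univ.filter fun t => p (s t)).card : ℝ) = ∑ t, g (s t) + N * q := by
    intro s
    simp [g, sum_sub_distrib, sum_boole]
  have hM : 0 < (N : ℝ) * q := by linarith
  set fail := univ.filter fun s : Fin N → α => ¬ θ ≤ ((univ.filter fun t => p (s t)).card : ℝ)
  have hfail : (N * q / 2) ^ 2 * ∑ s ∈ fail, ∏ t, w (s t) ≤ N * q := calc
    _ = ∑ s ∈ fail, (∏ t, w (s t)) * (N * q / 2) ^ 2 := by rw [mul_sum]; simp only [mul_comm]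
    _ ≤ ∑ s ∈ fail, (∏ t, w (s t)) * (∑ t, g (s t)) ^ 2 := by
        refine sum_le_sum fun s hs => mul_le_mul_of_nonneg_left ?_ (prod_nonneg fun t _ => hw₀ _)
        have := (mem_filter.1 hs).2
        rw [hcount] at this
        nlinarith
    _ ≤ ∑ s : Fin N → α, (∏ t, w (s t)) * (∑ t, g (s t)) ^ 2 :=
        sum_le_sum_of_subset_of_nonneg (subset_univ _) fun s _ _ =>
          mul_nonneg (prod_nonneg fun t _ => hw₀ _) (sq_nonneg _)
    _ ≤ N * q := by rw [sum_prod_mul_sum_sq hw g hg]; gcongr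
  rw [le_div_iff₀ hM]
  nlinarith

theorem one_sub_four_div_le_sum_prod_filter_le_card (hw₀ : ∀ a, 0 ≤ w a) (hw : ∑ a, w a = 1)
    (p : α → Prop) [DecidablePred p] {θ : ℝ} (hθ : 0 < θ)
    (hθq : 2 * θ ≤ N * ∑ a ∈ univ.filter p, w a) :
    1 - 4 / (N * ∑ a ∈ univ.filter p, w a) ≤
      ∑ s ∈ univ.filter (fun s : Fin N → α => θ ≤ ((univ.filter fun t => p (s t)).card : ℝ)),
        ∏ t, w (s t) := by
  have htotal := sum_filter_add_sum_filter_not univ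
    (fun s : Fin N → α => θ ≤ ((univ.filter fun t => p (s t)).card : ℝ)) fun s => ∏ t, w (s t)
  rw [sum_prod_eq_one hw] at htotal
  linarith [sum_prod_filter_card_lt_le hw₀ hw p hθ hθq]

end ProductWeights

theorem stmt_17_general {d k : ℕ} (ε : ℝ) (hε0 : 0 < ε) (hε : ε ≤ 1 / 2)
    (X : Finset (Pt d)) (hirr : KIrreducible k ε X)
    (Xs : Fin k → Finset (Pt d)) (hopt : IsOptPartition k X Xs)
    (i : ℕ) (hik : i < k)
    (c : Fin k → Pt d) (Ci : Finset (Pt d)) (hinv : InvariantP ε X Xs i c Ci) :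
    (∃ j : Fin k, i ≤ j.val ∧ (ε / (4 * k)) * Phi Ci X ≤ Phi Ci (Xs j)) ∧
    (∀ j : Fin k, i ≤ j.val → (ε / (4 * k)) * Phi Ci X ≤ Phi Ci (Xs j) →
      ∀ N : ℕ, (2 ^ 12 * k ^ 2 / ε ^ 2 : ℝ) ≤ (N : ℝ) →
        1 - 1 / (16 * k) ≤
          ∑ s ∈ (Finset.univ : Finset (Fin N → {x // x ∈ X})).filter
              (fun s => (2 ^ 6 * k / ε : ℝ) ≤
                ((Finset.univ.filter (fun t : Fin N => (s t : Pt d) ∈ Xs j)).card : ℝ)),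
            ∏ t : Fin N, (Phi Ci {(s t : Pt d)} / Phi Ci X)) := by
  refine ⟨hinv.exists_uncovered_le_Phi hε0.le hε hirr hopt hik, fun j _ hj N hN => ?_⟩
  have hpos := hinv.2.2
  have hk : (0 : ℝ) < k := by exact_mod_cast (Nat.zero_le i).trans_lt hik
  have hw : ∑ a : X, Phi Ci {(a : Pt d)} / Phi Ci X = 1 := by
    rw [← sum_div, sum_coe_sort X fun x => Phi Ci {x}, ← Phi_eq_sum_Phi_singleton,
      div_self hpos.ne']
  have hq : ∑ a ∈ univ.filter (fun a : X => (a : Pt d) ∈ Xs j), Phi Ci {(a : Pt d)} / Phi Ci X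
      = Phi Ci (Xs j) / Phi Ci X := by
    rw [← sum_div, sum_filter_mem_Phi_singleton (hopt.subset j)]
  have hNq : 2 ^ 10 * k / ε ≤ N * (Phi Ci (Xs j) / Phi Ci X) := calc
    (2 ^ 10 * k / ε : ℝ) = 2 ^ 12 * k ^ 2 / ε ^ 2 * (ε / (4 * k)) := by field_simp; ring
    _ ≤ N * (Phi Ci (Xs j) / Phi Ci X) :=
        mul_le_mul hN ((le_div_iff₀ hpos).2 hj) (by positivity) (Nat.cast_nonneg N)
  have hNq' : 2 ^ 11 * k ≤ 2 ^ 10 * k / ε := by rw [le_div_iff₀ hε0]; nlinarith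
  have htail := one_sub_four_div_le_sum_prod_filter_le_card
    (fun a => div_nonneg (Phi_nonneg _ _) hpos.le) hw (fun a : X => (a : Pt d) ∈ Xs j)
    (θ := 2 ^ 6 * k / ε) (N := N) (by positivity)
  rw [hq] at htail
  refine le_trans ?_ (htail ?_)
  · rw [sub_le_sub_iff_left, div_le_div_iff₀ (by linarith) (by positivity)]
    linarith
  · have : 2 ^ 10 * k / ε = 16 * (2 ^ 6 * k / ε) := by ring
    linarith [(by positivity : (0 : ℝ) ≤ 2 ^ 6 * k / ε)]

/-- Under the invariant `P(i)` (clusters reindexed so the covered clusters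
are `X₁, …, X_i`), there exists an uncovered index `j ∈ {i+1,…,k}` with
`Φ(C_i, X_j) ≥ (ε/(4k))·Φ(C_i, X)`; and for any such `j`, if `S` consists of
`N ≥ 2¹²·k²/ε²` independent `D²`-samples from `X` w.r.t. `C_i`, then with probability at
least `1 − 1/(16k)` at least `2⁶·k/ε` of the samples lie in `X_j`. -/
theorem stmt_17 {d k : ℕ} (ε : ℝ) (hε0 : 0 < ε) (hε : ε ≤ 1 / 2)
    (X : Finset (Pt d)) (hirr : KIrreducible k ε X)
    (Xs : Fin k → Finset (Pt d)) (hopt : IsOptPartition k X Xs)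
    (i : ℕ) (hi : 1 ≤ i) (hik : i < k)
    (c : Fin k → Pt d) (Ci : Finset (Pt d)) (hinv : InvariantP ε X Xs i c Ci) :
    (∃ j : Fin k, i ≤ j.val ∧ (ε / (4 * k)) * Phi Ci X ≤ Phi Ci (Xs j)) ∧
    (∀ j : Fin k, i ≤ j.val → (ε / (4 * k)) * Phi Ci X ≤ Phi Ci (Xs j) →
      ∀ N : ℕ, (2 ^ 12 * k ^ 2 / ε ^ 2 : ℝ) ≤ (N : ℝ) →
        1 - 1 / (16 * k) ≤
          ∑ s ∈ (Finset.univ : Finset (Fin N → {x // x ∈ X})).filter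
              (fun s => (2 ^ 6 * k / ε : ℝ) ≤
                ((Finset.univ.filter (fun t : Fin N => (s t : Pt d) ∈ Xs j)).card : ℝ)),
            ∏ t : Fin N, (Phi Ci {(s t : Pt d)} / Phi Ci X)) :=
  stmt_17_general ε hε0 hε X hirr Xs hopt i hik c Ci hinv
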